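/- Let 𝒲^∞(T;Z;H) = H^{k(k−1)/2} · 𝒲(T;Z;H) · ∏_{i=1}^k ∏_{a=k+1}^n (1 − H·Z_a/T_i) be the opposite trigonometric weight function. For k-element subsets I, J of {1,...,n}, with notation as before and H·Z_I = (H·Z_{i_1},...,H·Z_{i_k}): 𝒲^∞(H·Z_I; Z_{σ_J}; H) = δ_{I,J} · E(Z_I; H) · R(Z_{σ_I}). -/

import Mathlib

noncomputable section

open MvPolynomial

/-- The rational-function field `ℂ(Z₁,…,Z_n,H)`. -/
abbrev ZF (n : ℕ) : Type := FractionRing (MvPolynomial (Fin n ⊕ Unit) ℂ)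

def ZV (n : ℕ) (a : Fin n) : ZF n :=
  algebraMap (MvPolynomial (Fin n ⊕ Unit) ℂ) (ZF n) (X (Sum.inl a))

def HV (n : ℕ) : ZF n :=
  algebraMap (MvPolynomial (Fin n ⊕ Unit) ℂ) (ZF n) (X (Sum.inr ()))

/-- The function `U(T;Z;H)` of formula (3.1). -/
def Ufun {F : Type*} [Field F] (n k : ℕ) (T : Fin k → F) (Z : Fin n → F)
    (H : F) : F :=
  ∏ i : Fin k,
    ((∏ a ∈ Finset.univ.filter (fun a : Fin n => a.1 < i.1),
        (1 - H * Z a / T i)) *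
     (∏ b ∈ Finset.univ.filter (fun b : Fin n => i.1 < b.1 ∧ b.1 < k),
        (1 - Z b / T i)) *
     (∏ j ∈ Finset.univ.filter (fun j : Fin k => i < j),
        ((1 - H * T j / T i) / (1 - T j / T i))))

/-- The reduced trigonometric weight function `𝒲(T;Z;H) = Sym_T U(T;Z;H)`. -/
def Wtrig {F : Type*} [Field F] (n k : ℕ) (T : Fin k → F) (Z : Fin n → F)
    (H : F) : F :=
  ∑ σ : Equiv.Perm (Fin k), Ufun n k (T ∘ σ) Z H

/-- The trigonometric weight function
`𝒲⁰(T;Z;H) = 𝒲(T;Z;H) ∏_{i≤k} ∏_{a>k} (1 − Z_a/T_i)`. -/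
def W0 {F : Type*} [Field F] (n k : ℕ) (T : Fin k → F) (Z : Fin n → F)
    (H : F) : F :=
  Wtrig n k T Z H *
    ∏ i : Fin k, ∏ a ∈ Finset.univ.filter (fun a : Fin n => k ≤ a.1),
      (1 - Z a / T i)

/-- `E(T;H) = ∏_i ∏_{j≠i} (1 − H·T_i/T_j)`. -/
def Efun {F : Type*} [Field F] (k : ℕ) (T : Fin k → F) (H : F) : F :=
  ∏ i : Fin k, ∏ j ∈ Finset.univ.filter (fun j : Fin k => j ≠ i),
    (1 - H * T i / T j)

/-- `R(Z) = ∏_{a≤k} ∏_{b>k} (1 − Z_b/Z_a)`. -/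
def Rfun {F : Type*} [Field F] (n k : ℕ) (Z : Fin n → F) : F :=
  ∏ a ∈ Finset.univ.filter (fun a : Fin n => a.1 < k),
    ∏ b ∈ Finset.univ.filter (fun b : Fin n => k ≤ b.1),
      (1 - Z b / Z a)

/-- The increasing enumeration of a `k`-element subset of `{1, …, n}`. -/
def enum {n k : ℕ} (I : Finset (Fin n)) (hI : I.card = k) : Fin k → Fin n :=
  fun a => (I.orderIsoOfFin hI a : Fin n)

/-- The minimal-length permutation `σ_J` with `{σ_J(1),…,σ_J(k)} = J`. -/
def permOfSubset {n k : ℕ} (hk : k ≤ n) (J : Finset (Fin n)) (hJ : J.card = k) :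
    Equiv.Perm (Fin n) :=
  (finCongr (Nat.add_sub_cancel' hk)).symm.trans <|
    finSumFinEquiv.symm.trans <|
      (Equiv.sumCongr (J.orderIsoOfFin hJ).toEquiv
          ((Jᶜ.orderIsoOfFin (by simp [Finset.card_compl, hJ])).toEquiv.trans
            (Equiv.subtypeEquivRight fun x => Finset.mem_compl))).trans
        (Equiv.sumCompl (· ∈ J))


/-- The opposite trigonometric weight function
`𝒲^∞(T;Z;H) = H^{k(k−1)/2} 𝒲(T;Z;H) ∏_{i≤k} ∏_{a>k} (1 − H·Z_a/T_i)`. -/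
def Winf {F : Type*} [Field F] (n k : ℕ) (T : Fin k → F) (Z : Fin n → F)
    (H : F) : F :=
  H ^ (k * (k - 1) / 2) * Wtrig n k T Z H *
    ∏ i : Fin k, ∏ a ∈ Finset.univ.filter (fun a : Fin n => k ≤ a.1),
      (1 - H * Z a / T i)



theorem aux_pair_identity {F : Type*} [Field F] (u v H : F) (hu : u ≠ 0) (hv : v ≠ 0)
    (hH : H ≠ 0) (huv : u ≠ v) :
    H * (1 - u/v) * (1 - v/(H*u)) * ((1 - H*v/u)/(1 - v/u))
      = (1 - H*u/v) * (1 - H*v/u) := by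
  have h1 : (1 : F) - v/u ≠ 0 := by
    rw [sub_ne_zero]
    intro h
    exact huv (by field_simp at h; exact h)
  have huv' : u - v ≠ 0 := sub_ne_zero.mpr huv
  field_simp
  ring

theorem aux_filter_map_castLE {n k : ℕ} (hk : k ≤ n) (p : ℕ → Prop) [DecidablePred p]
    (hp : ∀ m, p m → m < k) :
    (Finset.univ.filter (fun a : Fin n => p a.1))
      = (Finset.univ.filter (fun a : Fin k => p a.1)).map (Fin.castLEEmb hk) := by
  ext a
  simp only [Finset.mem_filter, Finset.mem_map, Finset.mem_univ, true_and,
    Fin.castLEEmb_apply]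
  constructor
  · intro hpa
    exact ⟨⟨a.1, hp _ hpa⟩, hpa, by ext; simp⟩
  · rintro ⟨b, hb, rfl⟩
    simpa using hb

theorem aux_prod_pairs_cond {F : Type*} [CommMonoid F] {k : ℕ} (c : Fin k → Fin k → Prop)
    [∀ i j, Decidable (c i j)] (f : Fin k → Fin k → F) :
    (∏ i : Fin k, ∏ j ∈ Finset.univ.filter (fun j => c i j), f i j)
      = ∏ p : Fin k × Fin k, if c p.1 p.2 then f p.1 p.2 else 1 := by
  rw [← Finset.univ_product_univ, Finset.prod_product]
  exact Finset.prod_congr rfl fun i _ => Finset.prod_filter _ _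

theorem aux_prod_swap {F : Type*} [CommMonoid F] {k : ℕ} (g : Fin k × Fin k → F) :
    (∏ p : Fin k × Fin k, g (p.2, p.1)) = ∏ p : Fin k × Fin k, g p :=
  Fintype.prod_equiv (Equiv.prodComm _ _) _ _ (fun _ => rfl)

theorem aux_card_pairs (k : ℕ) :
    (Finset.univ.filter fun p : Fin k × Fin k => p.1 < p.2).card = k * (k - 1) / 2 := by
  rw [Finset.card_filter, ← Finset.univ_product_univ, Finset.sum_product, Finset.sum_comm]
  have h1 : ∀ j : Fin k, (∑ i : Fin k, if i < j then 1 else 0) = (j : ℕ) := by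
    intro j
    rw [← Finset.card_filter]
    have : Finset.univ.filter (fun i : Fin k => i < j) = Finset.Iio j := by ext x; simp
    rw [this, Fin.card_Iio]
  simp only [h1]
  rw [Fin.sum_univ_eq_sum_range (fun i => i), Finset.sum_range_id]

theorem aux_exists_lt {k : ℕ} (π : Equiv.Perm (Fin k)) (hπ : π ≠ 1) :
    ∃ i, π i < i := by
  by_contra hno
  push_neg at hno
  apply hπ
  have hsum : ∑ j : Fin k, ((π j : ℕ)) = ∑ j : Fin k, (j : ℕ) :=
    Equiv.sum_comp π (fun j => (j : ℕ))
  have h2 := (Finset.sum_eq_sum_iff_of_le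
    (fun (i : Fin k) (_ : i ∈ Finset.univ) => (show (i : ℕ) ≤ (π i : ℕ) from hno i))).mp hsum.symm
  exact Equiv.ext fun i => Fin.ext ((h2 i (Finset.mem_univ i)).symm)


theorem aux_Ufun_vanish {F : Type*} [Field F] {n k : ℕ} (hk : k ≤ n) (Z : Fin n → F)
    (e : Fin k → Fin n) (σ : Equiv.Perm (Fin n)) (H : F)
    (hH : H ≠ 0) (hZ0 : ∀ a, Z a ≠ 0)
    (hlink : ∀ a : Fin k, σ (Fin.castLE hk a) = e a)
    (π : Equiv.Perm (Fin k)) (hπ : π ≠ 1) :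
    Ufun n k ((fun a => H * Z (e a)) ∘ π) (Z ∘ σ) H = 0 := by
  obtain ⟨i, hi⟩ := aux_exists_lt π hπ
  unfold Ufun
  apply Finset.prod_eq_zero (Finset.mem_univ i)
  have hmem : Fin.castLE hk (π i) ∈ Finset.univ.filter (fun a : Fin n => a.1 < i.1) := by
    simp only [Finset.mem_filter, Finset.mem_univ, true_and, Fin.coe_castLE]
    exact hi
  have h0 : (1 : F) - H * (Z ∘ σ) (Fin.castLE hk (π i)) /
      (((fun a => H * Z (e a)) ∘ π) i) = 0 := by
    show (1 : F) - H * Z (σ (Fin.castLE hk (π i))) / (H * Z (e (π i))) = 0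
    rw [hlink (π i), div_self (mul_ne_zero hH (hZ0 _)), sub_self]
  rw [Finset.prod_eq_zero hmem h0, zero_mul, zero_mul]

theorem aux_Ufun_val {F : Type*} [Field F] {n k : ℕ} (hk : k ≤ n) (Z : Fin n → F)
    (e : Fin k → Fin n) (σ : Equiv.Perm (Fin n)) (H : F)
    (hH : H ≠ 0)
    (hlink : ∀ a : Fin k, σ (Fin.castLE hk a) = e a) :
    Ufun n k (fun a => H * Z (e a)) (Z ∘ σ) H
      = ∏ i : Fin k,
          ((∏ a ∈ Finset.univ.filter (fun a : Fin k => a.1 < i.1),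
              (1 - Z (e a) / Z (e i))) *
           (∏ b ∈ Finset.univ.filter (fun b : Fin k => i.1 < b.1),
              (1 - Z (e b) / (H * Z (e i)))) *
           (∏ j ∈ Finset.univ.filter (fun j : Fin k => i < j),
              ((1 - H * Z (e j) / Z (e i)) / (1 - Z (e j) / Z (e i))))) := by
  unfold Ufun
  refine Finset.prod_congr rfl fun i _ => ?_
  congr 1
  · congr 1
    · -- A part
      rw [aux_filter_map_castLE hk (fun m => m < i.1) (fun m hm => lt_trans hm i.isLt),
        Finset.prod_map]
      refine Finset.prod_congr rfl fun a _ => ?_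
      show (1 : F) - H * Z (σ (Fin.castLE hk a)) / (H * Z (e i)) = _
      rw [hlink a, mul_div_mul_left _ _ hH]
    · -- B part
      rw [aux_filter_map_castLE hk (fun m => i.1 < m ∧ m < k) (fun m hm => hm.2),
        Finset.prod_map]
      have hf : Finset.univ.filter (fun b : Fin k => i.1 < b.1 ∧ b.1 < k)
          = Finset.univ.filter (fun b : Fin k => i.1 < b.1) := by
        ext b; simp [b.isLt]
      rw [hf]
      refine Finset.prod_congr rfl fun b _ => ?_
      show (1 : F) - Z (σ (Fin.castLE hk b)) / (H * Z (e i)) = _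
      rw [hlink b]
  · -- C part
    refine Finset.prod_congr rfl fun j _ => ?_
    show ((1 : F) - H * (H * Z (e j)) / (H * Z (e i))) / (1 - H * Z (e j) / (H * Z (e i))) = _
    rw [mul_div_mul_left _ _ hH, mul_div_mul_left _ _ hH]

theorem aux_Wpart {F : Type*} [Field F] {n k : ℕ} (hk : k ≤ n) (Z : Fin n → F)
    (e : Fin k → Fin n) (σ : Equiv.Perm (Fin n)) (H : F)
    (hH : H ≠ 0) (hZ0 : ∀ a, Z a ≠ 0) (hZinj : Function.Injective Z)
    (heinj : Function.Injective e)
    (hlink : ∀ a : Fin k, σ (Fin.castLE hk a) = e a) :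
    H ^ (k * (k - 1) / 2) * Wtrig n k (fun a => H * Z (e a)) (Z ∘ σ) H
      = Efun k (fun a => Z (e a)) H := by
  unfold Wtrig
  rw [Fintype.sum_eq_single (1 : Equiv.Perm (Fin k))
    (fun π hπ => aux_Ufun_vanish hk Z e σ H hH hZ0 hlink π hπ)]
  rw [show (fun a => H * Z (e a)) ∘ ⇑(1 : Equiv.Perm (Fin k)) = fun a => H * Z (e a) from rfl]
  rw [aux_Ufun_val hk Z e σ H hH hlink]
  simp only [Finset.prod_mul_distrib]
  -- rewrite each double product into a product over pairs
  rw [aux_prod_pairs_cond (fun i a => a.1 < i.1) (fun i a => 1 - Z (e a) / Z (e i))]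
  rw [aux_prod_pairs_cond (fun i b => i.1 < b.1) (fun i b => 1 - Z (e b) / (H * Z (e i)))]
  rw [aux_prod_pairs_cond (fun i j => i < j)
    (fun i j => (1 - H * Z (e j) / Z (e i)) / (1 - Z (e j) / Z (e i)))]
  rw [← aux_prod_swap (fun p : Fin k × Fin k =>
    if p.2.1 < p.1.1 then 1 - Z (e p.2) / Z (e p.1) else 1)]
  rw [← aux_card_pairs k, ← Finset.prod_const, Finset.prod_filter]
  unfold Efun
  rw [aux_prod_pairs_cond (fun i j => j ≠ i) (fun i j => 1 - H * Z (e i) / Z (e j))]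
  have hsplit : ∀ p : Fin k × Fin k,
      (if p.2 ≠ p.1 then 1 - H * Z (e p.1) / Z (e p.2) else 1)
        = (if p.1 < p.2 then 1 - H * Z (e p.1) / Z (e p.2) else 1) *
          (if p.2 < p.1 then 1 - H * Z (e p.1) / Z (e p.2) else 1) := by
    intro p
    rcases lt_trichotomy p.1 p.2 with h | h | h
    · simp [h, h.ne', asymm h]
    · simp [h]
    · simp [h, h.ne, asymm h]
  rw [Finset.prod_congr rfl fun p _ => hsplit p, Finset.prod_mul_distrib]
  rw [← aux_prod_swap (fun p : Fin k × Fin k =>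
    if p.2 < p.1 then 1 - H * Z (e p.1) / Z (e p.2) else 1)]
  simp only [← Finset.prod_mul_distrib]
  refine Finset.prod_congr rfl fun p _ => ?_
  by_cases hp : p.1 < p.2
  · have hlt : p.2.1 < p.2.1 ∨ True := Or.inr trivial
    have h1 : (p.1 : Fin k).1 < p.2.1 := hp
    have h2 : ¬ p.2.1 < p.1.1 := by omega
    have h3 : ¬ p.2 < p.1 := asymm hp
    simp only [if_pos hp, if_pos h1, if_neg h2, if_neg h3]
    -- now the pair identity; note the swapped products produce (p.2, p.1) entries
    have hu := hZ0 (e p.1)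
    have hv := hZ0 (e p.2)
    have huv : Z (e p.1) ≠ Z (e p.2) := fun h => (ne_of_lt hp) (heinj (hZinj h))
    have hid := aux_pair_identity (Z (e p.1)) (Z (e p.2)) H hu hv hH huv
    rw [← hid]; ring
  · have h1 : ¬ (p.1 : Fin k).1 < p.2.1 := hp
    have h2 : ¬ p.2.1 < p.1.1 ∨ True := Or.inr trivial
    simp [hp, h1]


theorem aux_Ppart {F : Type*} [Field F] {n k : ℕ} (hk : k ≤ n) (Z : Fin n → F)
    (e : Fin k → Fin n) (σ : Equiv.Perm (Fin n)) (H : F)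
    (hH : H ≠ 0)
    (hlink : ∀ a : Fin k, σ (Fin.castLE hk a) = e a) :
    (∏ i : Fin k, ∏ a ∈ Finset.univ.filter (fun a : Fin n => k ≤ a.1),
        (1 - H * (Z ∘ σ) a / (H * Z (e i))))
      = Rfun n k (Z ∘ σ) := by
  unfold Rfun
  rw [aux_filter_map_castLE hk (fun m => m < k) (fun m hm => hm), Finset.prod_map,
    show (Finset.univ.filter (fun a : Fin k => a.1 < k)) = Finset.univ from by
      ext x; simp [x.isLt]]
  refine Finset.prod_congr rfl fun i _ => ?_
  refine Finset.prod_congr rfl fun b _ => ?_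
  show (1 : F) - H * (Z ∘ σ) b / (H * Z (e i))
      = 1 - (Z ∘ σ) b / Z (σ (Fin.castLE hk i))
  rw [hlink i, mul_div_mul_left _ _ hH]

theorem aux_permOfSubset_lt {n k : ℕ} (hk : k ≤ n) (J : Finset (Fin n)) (hJ : J.card = k)
    (a : Fin n) (ha : a.1 < k) : permOfSubset hk J hJ a = enum J hJ ⟨a.1, ha⟩ := by
  unfold permOfSubset
  have h1 : (finCongr (Nat.add_sub_cancel' hk)).symm a
      = Fin.castAdd (n - k) ⟨a.1, ha⟩ := by ext; simp
  simp only [Equiv.trans_apply, h1, finSumFinEquiv_symm_apply_castAdd,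
    Equiv.sumCongr_apply, Sum.map_inl, Equiv.sumCompl_apply_inl]
  rfl

theorem aux_permOfSubset_ge {n k : ℕ} (hk : k ≤ n) (J : Finset (Fin n)) (hJ : J.card = k)
    (a : Fin n) (ha : k ≤ a.1) : permOfSubset hk J hJ a ∉ J := by
  unfold permOfSubset
  have ha2 : a.1 - k < n - k := by omega
  have h1 : (finCongr (Nat.add_sub_cancel' hk)).symm a
      = Fin.natAdd k ⟨a.1 - k, ha2⟩ := by ext; simp; omega
  simp only [Equiv.trans_apply, h1, finSumFinEquiv_symm_apply_natAdd,
    Equiv.sumCongr_apply, Sum.map_inr, Equiv.sumCompl_apply_inr]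
  have := ((Jᶜ.orderIsoOfFin (by simp [Finset.card_compl, hJ])) ⟨a.1 - k, ha2⟩).2
  simp only [Finset.mem_compl] at this ⊢
  exact this

theorem aux_enum_mem {n k : ℕ} (J : Finset (Fin n)) (hJ : J.card = k) (a : Fin k) :
    enum J hJ a ∈ J := (J.orderIsoOfFin hJ a).2

theorem aux_enum_inj {n k : ℕ} (I : Finset (Fin n)) (hI : I.card = k) :
    Function.Injective (enum I hI) := fun a b h =>
  (I.orderIsoOfFin hI).injective (Subtype.coe_injective h)

theorem aux_ZV_ne_zero (n : ℕ) (a : Fin n) : ZV n a ≠ 0 := by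
  intro h
  have h2 : (X (Sum.inl a) : MvPolynomial (Fin n ⊕ Unit) ℂ) = 0 := by
    apply IsFractionRing.injective (MvPolynomial (Fin n ⊕ Unit) ℂ) (ZF n)
    simpa [ZV] using h
  exact MvPolynomial.X_ne_zero _ h2

theorem aux_HV_ne_zero (n : ℕ) : HV n ≠ 0 := by
  intro h
  have h2 : (X (Sum.inr ()) : MvPolynomial (Fin n ⊕ Unit) ℂ) = 0 := by
    apply IsFractionRing.injective (MvPolynomial (Fin n ⊕ Unit) ℂ) (ZF n)
    simpa [HV] using h
  exact MvPolynomial.X_ne_zero _ h2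

theorem aux_ZV_inj (n : ℕ) : Function.Injective (ZV n) := by
  intro a b h
  have h2 : (X (Sum.inl a) : MvPolynomial (Fin n ⊕ Unit) ℂ) = X (Sum.inl b) :=
    IsFractionRing.injective (MvPolynomial (Fin n ⊕ Unit) ℂ) (ZF n) h
  exact Sum.inl.inj (MvPolynomial.X_injective h2)


/-- Lemma 3.3 for `𝒲^∞`:
`𝒲^∞(H·Z_I; Z_{σ_J}; H) = δ_{I,J} · E(Z_I;H) · R(Z_{σ_I})`. -/
theorem opposite_trig_weight_function_evaluation (n k : ℕ) (hk : k ≤ n)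
    (I J : Finset (Fin n)) (hI : I.card = k) (hJ : J.card = k) :
    Winf n k (fun a => HV n * ZV n (enum I hI a)) (ZV n ∘ permOfSubset hk J hJ)
        (HV n)
      = (if I = J then 1 else 0) *
          Efun k (fun a => ZV n (enum I hI a)) (HV n) *
          Rfun n k (ZV n ∘ permOfSubset hk I hI) := by
  have hZ0 := aux_ZV_ne_zero n
  have hH := aux_HV_ne_zero n
  have hZinj := aux_ZV_inj n
  rcases eq_or_ne I J with rfl | hne
  · rw [if_pos rfl, one_mul]
    have heinj := aux_enum_inj I hI
    have hlink : ∀ a : Fin k,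
        permOfSubset hk I hJ (Fin.castLE hk a) = enum I hI a := by
      intro a
      rw [aux_permOfSubset_lt hk I hJ (Fin.castLE hk a) (by simpa using a.isLt)]
      exact congrArg (enum I hI) (Fin.ext rfl)
    calc Winf n k (fun a => HV n * ZV n (enum I hI a))
          (ZV n ∘ permOfSubset hk I hJ) (HV n)
        = (HV n ^ (k * (k - 1) / 2) *
            Wtrig n k (fun a => HV n * ZV n (enum I hI a))
              (ZV n ∘ permOfSubset hk I hJ) (HV n)) *
          (∏ i : Fin k, ∏ a ∈ Finset.univ.filter (fun a : Fin n => k ≤ a.1),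
            (1 - HV n * (ZV n ∘ permOfSubset hk I hJ) a /
              (HV n * ZV n (enum I hI i)))) := by
          rw [Winf, mul_assoc]
      _ = Efun k (fun a => ZV n (enum I hI a)) (HV n) *
            Rfun n k (ZV n ∘ permOfSubset hk I hI) := by
          rw [aux_Wpart hk (ZV n) (enum I hI) _ (HV n) hH hZ0 hZinj heinj hlink,
            aux_Ppart hk (ZV n) (enum I hI) _ (HV n) hH hlink]
  · rw [if_neg hne, zero_mul, zero_mul]
    obtain ⟨c, hcI, hcJ⟩ : ∃ c, c ∈ I ∧ c ∉ J := by
      by_contra h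
      push_neg at h
      exact hne (Finset.eq_of_subset_of_card_le (fun x hx => h x hx)
        (by rw [hI, hJ]))
    obtain ⟨c', hc'⟩ : ∃ c', enum I hI c' = c :=
      ⟨(I.orderIsoOfFin hI).symm ⟨c, hcI⟩, by simp [enum]⟩
    set σ := permOfSubset hk J hJ with hσdef
    set a := σ.symm c with hadef
    have hak : k ≤ a.1 := by
      by_contra h
      push_neg at h
      apply hcJ
      have h1 : σ a = enum J hJ ⟨a.1, h⟩ := aux_permOfSubset_lt hk J hJ a h
      have h2 : σ a = c := σ.apply_symm_apply c
      rw [← h2, h1]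
      exact aux_enum_mem J hJ _
    unfold Winf
    rw [mul_eq_zero]
    right
    apply Finset.prod_eq_zero (Finset.mem_univ c')
    have hmem : a ∈ Finset.univ.filter (fun a : Fin n => k ≤ a.1) := by
      simp [hak]
    apply Finset.prod_eq_zero hmem
    show (1 : ZF n) - HV n * ZV n (σ a) / (HV n * ZV n (enum I hI c')) = 0
    rw [σ.apply_symm_apply, hc', div_self (mul_ne_zero hH (hZ0 _)), sub_self]

end
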